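/- arXiv:1109.2818 — 6 statements merged into one kernel-verified Lean document; each statement's English description precedes it below -/
import Mathlib

section
/- Dissipativity estimate: set B = max(b₊, −b₋) and M = B·(b + c)/d. If h is a solution of the forced ENSO model on [t₀ − τ₂, ∞) (continuous, and satisfying the delay differential equation for all t > t₀), then for every t ≥ t₀ one has |h(t)| ≤ |h(t₀)|·e^{−d(t−t₀)} + M·(1 − e^{−d(t−t₀)}); in particular the interval [−M, M] is forward invariant: if |h(t₀)| ≤ M then |h(t)| ≤ M for all t ≥ t₀. -/
/-!
Multiplying by the integrating factor `e^{d s}` turns the equation into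
`(e^{d s} h)' = e^{d s} F(s)`, where the delayed forcing
`F = b·G(…) − c·G(…)` is bounded by `B(b + c)` because `|G| ≤ B`. Comparing
`e^{d s} h` with the solution `M e^{d s}` of `φ' = B(b + c) e^{d s}` and dividing
by `e^{d t}` gives the estimate; for `|h(t₀)| ≤ M` its right-hand side is a
convex combination of numbers `≤ M`.
-/

open Set Real

lemma abs_mul_tanh_div_le (a x : ℝ) : |a * tanh (x / a)| ≤ |a| := by
  rw [abs_mul]
  exact mul_le_of_le_one_right (abs_nonneg a) (abs_tanh_lt_one _).le

lemma abs_sub_le_sub_of_abs_hasDerivAt_le {f g f' g' : ℝ → ℝ} {a b : ℝ} (hab : a ≤ b)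
    (hf : ContinuousOn f (Icc a b)) (hg : ContinuousOn g (Icc a b))
    (hf' : ∀ x ∈ Ioo a b, HasDerivAt f (f' x) x) (hg' : ∀ x ∈ Ioo a b, HasDerivAt g (g' x) x)
    (bound : ∀ x ∈ Ioo a b, |f' x| ≤ g' x) :
    |f b - f a| ≤ g b - g a := by
  have monotone_of_sign (ε : ℝ) (hε : |ε| = 1) : g a + ε * f a ≤ g b + ε * f b := by
    refine monotoneOn_of_hasDerivWithinAt_nonneg (f' := fun x ↦ g' x + ε * f' x) (convex_Icc a b)
      (hg.add (continuousOn_const.mul hf)) (fun x hx ↦ ?_) (fun x hx ↦ ?_)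
      (left_mem_Icc.2 hab) (right_mem_Icc.2 hab) hab
    all_goals rw [interior_Icc] at hx
    · exact ((hg' x hx).add ((hf' x hx).const_mul ε)).hasDerivWithinAt
    · have : |ε * f' x| ≤ g' x := by rw [abs_mul, hε, one_mul]; exact bound x hx
      linarith [neg_abs_le (ε * f' x)]
  have h₁ := monotone_of_sign 1 abs_one
  have h₂ := monotone_of_sign (-1) (by simp)
  rw [abs_le]
  constructor <;> linarith

theorem abs_le_of_abs_hasDerivAt_add_mul_le {h h' : ℝ → ℝ} {d K t₀ t : ℝ} (hd : d ≠ 0)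
    (ht : t₀ ≤ t) (hcont : ContinuousOn h (Icc t₀ t))
    (hderiv : ∀ s ∈ Ioo t₀ t, HasDerivAt h (h' s) s)
    (hbound : ∀ s ∈ Ioo t₀ t, |h' s + d * h s| ≤ K) :
    |h t| ≤ |h t₀| * exp (-(d * (t - t₀))) + K / d * (1 - exp (-(d * (t - t₀)))) := by
  have hexp (s : ℝ) : HasDerivAt (fun s ↦ exp (d * s)) (exp (d * s) * d) s := by
    simpa using ((hasDerivAt_id s).const_mul d).exp
  have key : |exp (d * t) * h t - exp (d * t₀) * h t₀|
      ≤ K / d * exp (d * t) - K / d * exp (d * t₀) := by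
    refine abs_sub_le_sub_of_abs_hasDerivAt_le ht
      ((continuous_exp.comp (continuous_const_mul d)).continuousOn.mul hcont) (by fun_prop)
      (fun s hs ↦ (hexp s).mul (hderiv s hs)) (fun s _ ↦ (hexp s).const_mul (K / d))
      (fun s hs ↦ ?_)
    have : exp (d * s) * d * h s + exp (d * s) * h' s = exp (d * s) * (h' s + d * h s) := by ring
    rw [this, abs_mul, abs_of_pos (exp_pos _), mul_comm (K / d), mul_assoc, mul_div_cancel₀ _ hd]
    exact mul_le_mul_of_nonneg_left (hbound s hs) (exp_pos _).le
  have hdecay : exp (-(d * (t - t₀))) * exp (d * t) = exp (d * t₀) := by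
    rw [← exp_add]; ring_nf
  have habs : |h t| * exp (d * t) ≤ |h t₀| * exp (d * t₀) + K / d * (exp (d * t) - exp (d * t₀)) := by
    have := abs_sub_abs_le_abs_sub (exp (d * t) * h t) (exp (d * t₀) * h t₀)
    rw [abs_mul, abs_mul, abs_of_pos (exp_pos _), abs_of_pos (exp_pos _)] at this
    linarith
  refine le_of_mul_le_mul_right ?_ (exp_pos (d * t))
  linear_combination habs - (|h t₀| - K / d) * hdecay

theorem enso_dissipativity_general (b c d τ₁ τ₂ bp bm t₀ : ℝ)
    (hb : 0 < b) (hc : 0 < c) (hd : 0 < d) (hτ₂ : 0 < τ₂)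
    (hbp : 0 < bp) (hbm : bm < 0)
    (G : ℝ → ℝ)
    (hG : ∀ x : ℝ, G x =
      if 0 ≤ x then bp * Real.tanh (x / bp) else bm * Real.tanh (x / bm))
    (κ : ℝ → ℝ)
    (h : ℝ → ℝ) (hcont : ContinuousOn h (Set.Ici (t₀ - τ₂)))
    (hde : ∀ t : ℝ, t₀ < t → HasDerivAt h
      (b * G (κ (t - τ₁) * h (t - τ₁)) - c * G (κ (t - τ₂) * h (t - τ₂))
        - d * h t) t) :
    (∀ t : ℝ, t₀ ≤ t →
      |h t| ≤ |h t₀| * Real.exp (-(d * (t - t₀)))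
        + (max bp (-bm) * (b + c) / d) * (1 - Real.exp (-(d * (t - t₀))))) ∧
    (|h t₀| ≤ max bp (-bm) * (b + c) / d →
      ∀ t : ℝ, t₀ ≤ t → |h t| ≤ max bp (-bm) * (b + c) / d) := by
  set B := max bp (-bm)
  have hG_le (x : ℝ) : |G x| ≤ B := by
    rw [hG x]
    split_ifs
    · exact (abs_mul_tanh_div_le bp x).trans ((abs_of_pos hbp).trans_le (le_max_left _ _))
    · exact (abs_mul_tanh_div_le bm x).trans ((abs_of_neg hbm).trans_le (le_max_right _ _))
  have hforcing (x y : ℝ) : |b * G x - c * G y| ≤ B * (b + c) := by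
    have := abs_sub (b * G x) (c * G y)
    rw [abs_mul, abs_mul, abs_of_pos hb, abs_of_pos hc] at this
    nlinarith [hG_le x, hG_le y]
  have estimate (t : ℝ) (ht : t₀ ≤ t) := abs_le_of_abs_hasDerivAt_add_mul_le hd.ne' ht
    (hcont.mono fun s hs ↦ by simp only [mem_Ici]; linarith [hs.1])
    (fun s hs ↦ hde s hs.1) (fun s _ ↦ by simpa using hforcing _ _)
  refine ⟨estimate, fun hinit t ht ↦ ?_⟩
  have hdecay_le : exp (-(d * (t - t₀))) ≤ 1 := exp_le_one_iff.2 (by nlinarith)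
  nlinarith [estimate t ht, exp_pos (-(d * (t - t₀)))]

/-- Dissipativity estimate for the forced ENSO model: with
`B = max(b₊, −b₋)` and `M = B(b+c)/d`, every solution on `[t₀−τ₂, ∞)`
satisfies `|h(t)| ≤ |h(t₀)|e^{−d(t−t₀)} + M(1 − e^{−d(t−t₀)})` for `t ≥ t₀`;
in particular `[−M, M]` is forward invariant. -/
theorem enso_dissipativity (b c d τ₁ τ₂ bp bm k₀ dk ω t₀ : ℝ)
    (hb : 0 < b) (hc : 0 < c) (hd : 0 < d) (hτ₁ : 0 < τ₁) (hτ₂ : 0 < τ₂)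
    (hbp : 0 < bp) (hbm : bm < 0)
    (G : ℝ → ℝ)
    (hG : ∀ x : ℝ, G x =
      if 0 ≤ x then bp * Real.tanh (x / bp) else bm * Real.tanh (x / bm))
    (κ : ℝ → ℝ) (hκ : ∀ t : ℝ, κ t = k₀ + dk * Real.sin (ω * t))
    (h : ℝ → ℝ) (hcont : ContinuousOn h (Set.Ici (t₀ - τ₂)))
    (hde : ∀ t : ℝ, t₀ < t → HasDerivAt h
      (b * G (κ (t - τ₁) * h (t - τ₁)) - c * G (κ (t - τ₂) * h (t - τ₂))
        - d * h t) t) :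
    (∀ t : ℝ, t₀ ≤ t →
      |h t| ≤ |h t₀| * Real.exp (-(d * (t - t₀)))
        + (max bp (-bm) * (b + c) / d) * (1 - Real.exp (-(d * (t - t₀))))) ∧
    (|h t₀| ≤ max bp (-bm) * (b + c) / d →
      ∀ t : ℝ, t₀ ≤ t → |h t| ≤ max bp (-bm) * (b + c) / d) :=
  enso_dissipativity_general b c d τ₁ τ₂ bp bm t₀ hb hc hd hτ₂ hbp hbm G hG κ h hcont hde
end

section
/- Global existence and uniqueness by the method of steps: for every continuous initial history φ : [−τ₂, 0] → ℝ there exists a unique continuous function h : [−τ₂, ∞) → ℝ such that h = φ on [−τ₂, 0], h is differentiable on (0, ∞), and h satisfies the forced ENSO delay differential equation for all t > 0. -/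
/-!
Method of steps. Write the equation as `h' = F h - d * h`, where `F h` on `[0, a + τ₁]` only
depends on `h` on `[-τ₂, a]`. Extend `φ` constantly to `ψ` and let `T u` be the solution of the
linear equation `y' = F u - d * y` with `y = ψ` on `(-∞, 0]` (variation of constants). Then `T u`
on `(-∞, a + τ₁]` only depends on `u` on `(-∞, a]`, so the iterates `T^[n] ψ` stabilise on
`(-∞, n * τ₁]` and glue to a continuous fixed point of `T`, which is a solution. Conversely, if two
solutions agree on `[-τ₂, a]` with `a ≥ 0`, their difference `w` satisfies `w' = -d * w` on
`[a, a + τ₁]` and `w a = 0`, so `exp (d * t) * w t` is constant and `w` vanishes there too.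
-/

open Set Function Filter Topology

theorem Real.continuous_tanh : Continuous Real.tanh := by
  simp only [funext Real.tanh_eq_sinh_div_cosh]
  exact Real.continuous_sinh.div Real.continuous_cosh fun x => (Real.cosh_pos x).ne'

theorem continuous_ite_mul_tanh (p q : ℝ) :
    Continuous fun x : ℝ => if 0 ≤ x then p * Real.tanh (x / p) else q * Real.tanh (x / q) := by
  refine Continuous.if_le ?_ ?_ continuous_const continuous_id fun x hx => ?_
  · exact continuous_const.mul (Real.continuous_tanh.comp (continuous_id.div_const p))
  · exact continuous_const.mul (Real.continuous_tanh.comp (continuous_id.div_const q))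
  · simp [← hx]

theorem le_natCeil_div_mul {τ : ℝ} (hτ : 0 < τ) (t : ℝ) : t ≤ ⌈t / τ⌉₊ * τ :=
  (div_le_iff₀ hτ).1 (Nat.le_ceil _)

section LinearEquation

variable {d y₀ : ℝ} {f g : ℝ → ℝ}

/-- Variation of constants for `y' = f - d * y`, `y 0 = y₀`. -/
noncomputable def linearSolution (d y₀ : ℝ) (f : ℝ → ℝ) (t : ℝ) : ℝ :=
  Real.exp (-(d * t)) * (y₀ + ∫ s in (0 : ℝ)..t, Real.exp (d * s) * f s)

@[simp]
theorem linearSolution_zero : linearSolution d y₀ f 0 = y₀ := by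
  simp [linearSolution]

theorem hasDerivAt_linearSolution (hf : Continuous f) (t : ℝ) :
    HasDerivAt (linearSolution d y₀ f) (f t - d * linearSolution d y₀ f t) t := by
  have hexp : HasDerivAt (fun s => Real.exp (-(d * s))) (Real.exp (-(d * t)) * -d) t := by
    simpa using ((hasDerivAt_id t).const_mul d).neg.exp
  have hint : HasDerivAt (fun t => ∫ s in (0 : ℝ)..t, Real.exp (d * s) * f s)
      (Real.exp (d * t) * f t) t :=
    ((by fun_prop : Continuous fun s => Real.exp (d * s)).mul hf).integral_hasStrictDerivAt
      0 t |>.hasDerivAt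
  refine (hexp.mul (hint.const_add y₀)).congr_deriv ?_
  have hinv : Real.exp (d * t) * Real.exp (-(d * t)) = 1 := by
    rw [← Real.exp_add, add_neg_cancel, Real.exp_zero]
  rw [linearSolution]
  linear_combination f t * hinv

theorem continuous_linearSolution (hf : Continuous f) : Continuous (linearSolution d y₀ f) :=
  continuous_iff_continuousAt.2 fun t => (hasDerivAt_linearSolution hf t).continuousAt

theorem linearSolution_congr {t : ℝ} (ht : 0 ≤ t) (hfg : EqOn f g (Icc 0 t)) :
    linearSolution d y₀ f t = linearSolution d y₀ g t := by
  unfold linearSolution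
  congr 2
  refine intervalIntegral.integral_congr fun s hs => ?_
  rw [uIcc_of_le ht] at hs
  simp only [hfg hs]

theorem eq_zero_of_hasDerivAt_eq_neg_mul {w : ℝ → ℝ} {a b : ℝ} (hab : a ≤ b)
    (hw : ContinuousOn w (Icc a b)) (hw' : ∀ x ∈ Ioo a b, HasDerivAt w (-d * w x) x)
    (ha : w a = 0) : w b = 0 := by
  rcases hab.eq_or_lt with rfl | hab
  · exact ha
  obtain ⟨x, hx, hslope⟩ := exists_hasDerivAt_eq_slope (fun x => Real.exp (d * x) * w x)
    (fun _ => 0) hab (by fun_prop) fun x hx =>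
      ((((hasDerivAt_id x).const_mul d).exp).mul (hw' x hx)).congr_deriv (by ring)
  simpa [ha, sub_eq_zero, (sub_pos.2 hab).ne', Real.exp_ne_zero] using hslope.symm

end LinearEquation

section MethodOfSteps

variable {α : Type*} {T : (ℝ → α) → ℝ → α} {τ : ℝ} {u₀ : ℝ → α}

noncomputable def stepsLimit (T : (ℝ → α) → ℝ → α) (τ : ℝ) (u₀ : ℝ → α) (t : ℝ) : α :=
  T^[⌈t / τ⌉₊] u₀ t

variable (hT : ∀ u v a, EqOn u v (Iic a) → EqOn (T u) (T v) (Iic (a + τ)))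
  (h₀ : EqOn (T u₀) u₀ (Iic 0))
include hT h₀

theorem iterate_succ_eqOn_Iic (n : ℕ) : EqOn (T^[n + 1] u₀) (T^[n] u₀) (Iic (n * τ)) := by
  induction n with
  | zero => simpa using h₀
  | succ n ih =>
    simpa only [← iterate_succ_apply', Nat.cast_succ, add_one_mul] using hT _ _ _ ih

theorem iterate_eqOn_Iic_of_le (hτ : 0 ≤ τ) {m n : ℕ} (hmn : m ≤ n) :
    EqOn (T^[n] u₀) (T^[m] u₀) (Iic (m * τ)) := by
  induction n, hmn using Nat.le_induction with
  | base => exact eqOn_refl _ _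
  | succ n hmn ih =>
    have hle : (m : ℝ) * τ ≤ n * τ := by gcongr
    exact (iterate_succ_eqOn_Iic hT h₀ n |>.mono (Iic_subset_Iic.2 hle)).trans ih

theorem stepsLimit_eqOn_iterate (hτ : 0 < τ) (n : ℕ) :
    EqOn (stepsLimit T τ u₀) (T^[n] u₀) (Iic (n * τ)) := fun t ht => by
  rcases le_total n ⌈t / τ⌉₊ with hn | hn
  · exact iterate_eqOn_Iic_of_le hT h₀ hτ.le hn ht
  · exact (iterate_eqOn_Iic_of_le hT h₀ hτ.le hn (le_natCeil_div_mul hτ t)).symm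

theorem stepsLimit_fixed (hτ : 0 < τ) : T (stepsLimit T τ u₀) = stepsLimit T τ u₀ := by
  funext t
  set n := ⌈t / τ⌉₊
  have ht : t ≤ n * τ := le_natCeil_div_mul hτ t
  calc T (stepsLimit T τ u₀) t = T^[n + 1] u₀ t := by
        rw [iterate_succ_apply']
        exact hT _ _ _ (stepsLimit_eqOn_iterate hT h₀ hτ n) (ht.trans (le_add_of_nonneg_right hτ.le))
    _ = T^[n] u₀ t := iterate_succ_eqOn_Iic hT h₀ n ht
    _ = stepsLimit T τ u₀ t := rfl

theorem continuous_stepsLimit [TopologicalSpace α] (hτ : 0 < τ)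
    (hTc : ∀ u, Continuous u → Continuous (T u)) (hu₀ : Continuous u₀) :
    Continuous (stepsLimit T τ u₀) := by
  refine continuous_iff_continuousAt.2 fun t => ?_
  have hcont : Continuous (T^[⌈t / τ⌉₊ + 1] u₀) := by
    induction ⌈t / τ⌉₊ + 1 with
    | zero => exact hu₀
    | succ n ih => rw [iterate_succ_apply']; exact hTc _ ih
  have ht : t < (⌈t / τ⌉₊ + 1 : ℕ) * τ := by
    push_cast; linarith [le_natCeil_div_mul hτ t]
  refine hcont.continuousAt.congr (eventuallyEq_of_mem (Iio_mem_nhds ht) ?_)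
  exact fun s hs => (stepsLimit_eqOn_iterate hT h₀ hτ _ (Iio_subset_Iic_self hs)).symm

end MethodOfSteps

section DelayEquation

variable {F : (ℝ → ℝ) → ℝ → ℝ} {d r τ : ℝ} {φ ψ : ℝ → ℝ}

def HasLag (F : (ℝ → ℝ) → ℝ → ℝ) (r τ : ℝ) : Prop :=
  ∀ u v a, EqOn u v (Icc r a) → EqOn (F u) (F v) (Icc 0 (a + τ))

def IsDelaySolution (F : (ℝ → ℝ) → ℝ → ℝ) (d r : ℝ) (φ h : ℝ → ℝ) : Prop :=
  ContinuousOn h (Ici r) ∧ (∀ t ∈ Icc r (0 : ℝ), h t = φ t) ∧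
    ∀ t : ℝ, 0 < t → HasDerivAt h (F h t - d * h t) t

noncomputable def delayStep (F : (ℝ → ℝ) → ℝ → ℝ) (d : ℝ) (ψ u : ℝ → ℝ) (t : ℝ) : ℝ :=
  if t ≤ 0 then ψ t else linearSolution d (ψ 0) (F u) t

theorem delayStep_eqOn_Iic_zero (u : ℝ → ℝ) : EqOn (delayStep F d ψ u) ψ (Iic 0) :=
  fun _ ht => if_pos ht

theorem delayStep_congr (hF : HasLag F r τ)
    {u v : ℝ → ℝ} {a : ℝ} (huv : EqOn u v (Iic a)) :
    EqOn (delayStep F d ψ u) (delayStep F d ψ v) (Iic (a + τ)) := fun t ht => by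
  unfold delayStep
  split_ifs with h0
  · rfl
  · refine linearSolution_congr (not_le.1 h0).le ((hF u v a ?_).mono (Icc_subset_Icc_right ht))
    exact huv.mono Icc_subset_Iic_self

theorem continuous_delayStep (hψ : Continuous ψ) {u : ℝ → ℝ} (hFu : Continuous (F u)) :
    Continuous (delayStep F d ψ u) :=
  Continuous.if_le hψ (continuous_linearSolution hFu) continuous_id continuous_const
    fun t ht => by simp [ht]

theorem hasDerivAt_of_delayStep_eq {h : ℝ → ℝ} (hfix : delayStep F d ψ h = h)
    (hFh : Continuous (F h)) {t : ℝ} (ht : 0 < t) : HasDerivAt h (F h t - d * h t) t := by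
  have hloc : linearSolution d (ψ 0) (F h) =ᶠ[𝓝 t] h :=
    eventually_of_mem (Ioi_mem_nhds ht) fun s hs =>
      (if_neg (not_le.2 hs)).symm.trans (congrFun hfix s)
  exact (hasDerivAt_linearSolution hFh t).congr_of_eventuallyEq hloc.symm
    |>.congr_deriv (by rw [hloc.eq_of_nhds])


theorem exists_isDelaySolution
    (hF : HasLag F r τ)
    (hFc : ∀ u, Continuous u → Continuous (F u)) (hτ : 0 < τ) (hr : r ≤ 0)
    (hφ : ContinuousOn φ (Icc r 0)) : ∃ h, IsDelaySolution F d r φ h := by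
  set ψ : ℝ → ℝ := fun t => φ (projIcc r 0 hr t)
  have hψ : Continuous ψ :=
    hφ.comp_continuous (continuous_subtype_val.comp continuous_projIcc) fun t => (projIcc r 0 hr t).2
  have hT : ∀ u v a, EqOn u v (Iic a) →
      EqOn (delayStep F d ψ u) (delayStep F d ψ v) (Iic (a + τ)) :=
    fun _ _ _ => delayStep_congr hF
  have h₀ : EqOn (delayStep F d ψ ψ) ψ (Iic 0) := delayStep_eqOn_Iic_zero ψ
  set h := stepsLimit (delayStep F d ψ) τ ψ
  have hfix : delayStep F d ψ h = h := stepsLimit_fixed hT h₀ hτ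
  have hcont : Continuous h :=
    continuous_stepsLimit hT h₀ hτ (fun u hu => continuous_delayStep hψ (hFc u hu)) hψ
  refine ⟨h, hcont.continuousOn, fun t ht => ?_, fun t ht => ?_⟩
  · rw [← hfix, delayStep_eqOn_Iic_zero h ht.2]
    simp [ψ, projIcc_of_mem hr ht]
  · exact hasDerivAt_of_delayStep_eq hfix (hFc h hcont) ht

theorem IsDelaySolution.eqOn_Icc_add
    (hF : HasLag F r τ)
    {g h : ℝ → ℝ} (hg : IsDelaySolution F d r φ g) (hh : IsDelaySolution F d r φ h)
    (hr : r ≤ 0) {a : ℝ} (ha : 0 ≤ a) (hgh : EqOn g h (Icc r a)) :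
    EqOn g h (Icc r (a + τ)) := fun t ht => by
  rcases le_or_gt t a with hta | hat
  · exact hgh ⟨ht.1, hta⟩
  have hsub : Icc a t ⊆ Ici r := fun x hx => hr.trans (ha.trans hx.1)
  have hderiv : ∀ x ∈ Ioo a t, HasDerivAt (g - h) (-d * (g - h) x) x := fun x hx => by
    have hx0 : 0 < x := ha.trans_lt hx.1
    have hFx : F g x = F h x := hF g h a hgh ⟨hx0.le, hx.2.le.trans ht.2⟩
    refine ((hg.2.2 x hx0).sub (hh.2.2 x hx0)).congr_deriv ?_
    rw [hFx, Pi.sub_apply]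
    ring
  have := eq_zero_of_hasDerivAt_eq_neg_mul hat.le ((hg.1.sub hh.1).mono hsub) hderiv
    (sub_eq_zero.2 (hgh ⟨hr.trans ha, le_rfl⟩))
  exact sub_eq_zero.1 this

theorem IsDelaySolution.eqOn
    (hF : HasLag F r τ)
    {g h : ℝ → ℝ} (hg : IsDelaySolution F d r φ g) (hh : IsDelaySolution F d r φ h)
    (hτ : 0 < τ) (hr : r ≤ 0) : EqOn g h (Ici r) := by
  have hsteps : ∀ n : ℕ, EqOn g h (Icc r (n * τ)) := by
    intro n
    induction n with
    | zero =>
      rw [Nat.cast_zero, zero_mul]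
      exact fun t ht => (hg.2.1 t ht).trans (hh.2.1 t ht).symm
    | succ n ih =>
      simpa only [Nat.cast_succ, add_one_mul] using
        hg.eqOn_Icc_add hF hh hr (by positivity) ih
  exact fun t ht => hsteps _ ⟨ht, le_natCeil_div_mul hτ t⟩

end DelayEquation

section Enso

variable {b c τ₁ τ₂ : ℝ} {G κ : ℝ → ℝ}

def ensoRhs (b c τ₁ τ₂ : ℝ) (G κ u : ℝ → ℝ) (t : ℝ) : ℝ :=
  b * G (κ (t - τ₁) * u (t - τ₁)) - c * G (κ (t - τ₂) * u (t - τ₂))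

theorem ensoRhs_hasLag (hτ₁₂ : τ₁ ≤ τ₂) : HasLag (ensoRhs b c τ₁ τ₂ G κ) (-τ₂) τ₁ :=
  fun u v a huv t ht => by
    have h₁ : u (t - τ₁) = v (t - τ₁) := huv ⟨by linarith [ht.1], by linarith [ht.2]⟩
    have h₂ : u (t - τ₂) = v (t - τ₂) := huv ⟨by linarith [ht.1], by linarith [ht.2]⟩
    simp only [ensoRhs, h₁, h₂]

theorem continuous_ensoRhs (hG : Continuous G) (hκ : Continuous κ) {u : ℝ → ℝ}
    (hu : Continuous u) : Continuous (ensoRhs b c τ₁ τ₂ G κ u) := by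
  unfold ensoRhs
  fun_prop

end Enso

theorem enso_existence_uniqueness_general (b c d τ₁ τ₂ bp bm k₀ dk ω : ℝ)
    (hτ₁ : 0 < τ₁) (hτ₁₂ : τ₁ ≤ τ₂)
    (G : ℝ → ℝ)
    (hG : ∀ x : ℝ, G x =
      if 0 ≤ x then bp * Real.tanh (x / bp) else bm * Real.tanh (x / bm))
    (κ : ℝ → ℝ) (hκ : ∀ t : ℝ, κ t = k₀ + dk * Real.sin (ω * t))
    (φ : ℝ → ℝ) (hφ : ContinuousOn φ (Set.Icc (-τ₂) 0)) :
    ∃ h : ℝ → ℝ,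
      (ContinuousOn h (Set.Ici (-τ₂)) ∧
        (∀ t ∈ Set.Icc (-τ₂) (0 : ℝ), h t = φ t) ∧
        (∀ t : ℝ, 0 < t → HasDerivAt h
          (b * G (κ (t - τ₁) * h (t - τ₁)) - c * G (κ (t - τ₂) * h (t - τ₂))
            - d * h t) t)) ∧
      (∀ g : ℝ → ℝ,
        (ContinuousOn g (Set.Ici (-τ₂)) ∧
          (∀ t ∈ Set.Icc (-τ₂) (0 : ℝ), g t = φ t) ∧
          (∀ t : ℝ, 0 < t → HasDerivAt g
            (b * G (κ (t - τ₁) * g (t - τ₁)) - c * G (κ (t - τ₂) * g (t - τ₂))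
              - d * g t) t)) →
        ∀ t : ℝ, -τ₂ ≤ t → g t = h t) := by
  have hGc : Continuous G := by
    rw [funext hG]
    exact continuous_ite_mul_tanh bp bm
  have hκc : Continuous κ := by
    rw [funext hκ]
    fun_prop
  have hr : -τ₂ ≤ 0 := by linarith
  obtain ⟨h, hh⟩ := exists_isDelaySolution (d := d) (ensoRhs_hasLag (b := b) (c := c) hτ₁₂)
    (fun _ => continuous_ensoRhs hGc hκc) hτ₁ hr hφ
  exact ⟨h, hh, fun g hg t ht => IsDelaySolution.eqOn (ensoRhs_hasLag hτ₁₂) hg hh hτ₁ hr ht⟩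

/-- Global existence and uniqueness by the method of steps: for every
continuous initial history `φ : [−τ₂, 0] → ℝ` there exists a unique
continuous function `h : [−τ₂, ∞) → ℝ` with `h = φ` on `[−τ₂, 0]` that
satisfies the forced ENSO delay differential equation for all `t > 0`. -/
theorem enso_existence_uniqueness (b c d τ₁ τ₂ bp bm k₀ dk ω : ℝ)
    (hb : 0 < b) (hc : 0 < c) (hd : 0 < d) (hτ₁ : 0 < τ₁) (hτ₁₂ : τ₁ ≤ τ₂)
    (hbp : 0 < bp) (hbm : bm < 0)
    (G : ℝ → ℝ)
    (hG : ∀ x : ℝ, G x =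
      if 0 ≤ x then bp * Real.tanh (x / bp) else bm * Real.tanh (x / bm))
    (κ : ℝ → ℝ) (hκ : ∀ t : ℝ, κ t = k₀ + dk * Real.sin (ω * t))
    (φ : ℝ → ℝ) (hφ : ContinuousOn φ (Set.Icc (-τ₂) 0)) :
    ∃ h : ℝ → ℝ,
      (ContinuousOn h (Set.Ici (-τ₂)) ∧
        (∀ t ∈ Set.Icc (-τ₂) (0 : ℝ), h t = φ t) ∧
        (∀ t : ℝ, 0 < t → HasDerivAt h
          (b * G (κ (t - τ₁) * h (t - τ₁)) - c * G (κ (t - τ₂) * h (t - τ₂))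
            - d * h t) t)) ∧
      (∀ g : ℝ → ℝ,
        (ContinuousOn g (Set.Ici (-τ₂)) ∧
          (∀ t ∈ Set.Icc (-τ₂) (0 : ℝ), g t = φ t) ∧
          (∀ t : ℝ, 0 < t → HasDerivAt g
            (b * G (κ (t - τ₁) * g (t - τ₁)) - c * G (κ (t - τ₂) * g (t - τ₂))
              - d * g t) t)) →
        ∀ t : ℝ, -τ₂ ≤ t → g t = h t) :=
  enso_existence_uniqueness_general b c d τ₁ τ₂ bp bm k₀ dk ω hτ₁ hτ₁₂ G hG κ hκ φ hφ
end

section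
/- Sufficient condition for linear stability of the trivial equilibrium: if k₀·(b + c) < d, then every root λ ∈ ℂ of the characteristic function χ satisfies Re λ < 0. -/
/-! If `Re λ ≥ 0`, both delay factors `e^{-λτᵢ}` have modulus at most `1`, so a root satisfies
`Re (λ + d) ≤ |λ + d| = |b k₀ e^{-λτ₁} - c k₀ e^{-λτ₂}| ≤ k₀ (b + c) < d`, forcing `Re λ < 0`. -/

open Complex

lemma norm_cexp_neg_mul_ofReal_le_one {z : ℂ} {τ : ℝ} (hz : 0 ≤ z.re) (hτ : 0 ≤ τ) :
    ‖cexp (-(z * τ))‖ ≤ 1 := by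
  rw [norm_exp, Real.exp_le_one_iff, neg_re, re_mul_ofReal, neg_nonpos]
  exact mul_nonneg hz hτ

lemma norm_ofReal_mul_sub_ofReal_mul_le {p q : ℝ} (hp : 0 ≤ p) (hq : 0 ≤ q) {u v : ℂ}
    (hu : ‖u‖ ≤ 1) (hv : ‖v‖ ≤ 1) : ‖(p : ℂ) * u - q * v‖ ≤ p + q :=
  calc ‖(p : ℂ) * u - q * v‖ ≤ p * ‖u‖ + q * ‖v‖ := by
        simpa [norm_mul, abs_of_nonneg hp, abs_of_nonneg hq] using norm_sub_le ((p : ℂ) * u) (q * v)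
    _ ≤ p * 1 + q * 1 := by gcongr
    _ = p + q := by ring

lemma re_neg_of_norm_add_ofReal_lt {z : ℂ} {d : ℝ} (h : ‖z + d‖ < d) : z.re < 0 := by
  have : (z + d).re < d := (re_le_norm _).trans_lt h
  simpa using this

theorem enso_linear_stability_general (b c d τ₁ τ₂ k₀ : ℝ)
    (hb : 0 < b) (hc : 0 < c) (hτ₁ : 0 < τ₁) (hτ₂ : 0 < τ₂)
    (hk₀ : 0 ≤ k₀)
    (χ : ℂ → ℂ)
    (hχ : ∀ lam : ℂ, χ lam = lam + (d : ℂ)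
      - (b : ℂ) * (k₀ : ℂ) * Complex.exp (-(lam * (τ₁ : ℂ)))
      + (c : ℂ) * (k₀ : ℂ) * Complex.exp (-(lam * (τ₂ : ℂ))))
    (hstab : k₀ * (b + c) < d) :
    ∀ lam : ℂ, χ lam = 0 → lam.re < 0 := by
  intro lam hroot
  by_contra! hre
  have hroot_eq : lam + d = ((b * k₀ : ℝ) : ℂ) * cexp (-(lam * τ₁))
      - ((c * k₀ : ℝ) : ℂ) * cexp (-(lam * τ₂)) := by
    push_cast
    linear_combination (hχ lam).symm.trans hroot
  have hbound : ‖lam + d‖ ≤ b * k₀ + c * k₀ := hroot_eq ▸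
    norm_ofReal_mul_sub_ofReal_mul_le (by positivity) (by positivity)
      (norm_cexp_neg_mul_ofReal_le_one hre hτ₁.le) (norm_cexp_neg_mul_ofReal_le_one hre hτ₂.le)
  exact hre.not_gt (re_neg_of_norm_add_ofReal_lt (d := d) (by linarith))

/-- Sufficient condition for linear stability of the trivial equilibrium:
if `k₀(b+c) < d`, then every root `λ ∈ ℂ` of the characteristic function `χ`
satisfies `Re λ < 0`. -/
theorem enso_linear_stability (b c d τ₁ τ₂ k₀ : ℝ)
    (hb : 0 < b) (hc : 0 < c) (hd : 0 < d) (hτ₁ : 0 < τ₁) (hτ₂ : 0 < τ₂)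
    (hbc : c < b) (hk₀ : 0 ≤ k₀)
    (χ : ℂ → ℂ)
    (hχ : ∀ lam : ℂ, χ lam = lam + (d : ℂ)
      - (b : ℂ) * (k₀ : ℂ) * Complex.exp (-(lam * (τ₁ : ℂ)))
      + (c : ℂ) * (k₀ : ℂ) * Complex.exp (-(lam * (τ₂ : ℂ))))
    (hstab : k₀ * (b + c) < d) :
    ∀ lam : ℂ, χ lam = 0 → lam.re < 0 :=
  enso_linear_stability_general b c d τ₁ τ₂ k₀ hb hc hτ₁ hτ₂ hk₀ χ hχ hstab
end

section
/- Instability of the trivial equilibrium past the branch point: if k₀ > d/(b − c), then the characteristic function χ has a real root λ > 0 (so the trivial equilibrium h ≡ 0 of the unforced ENSO model is linearly unstable for all k₀ beyond the branch point B). -/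
/-!
On the real axis `χ` is a continuous real function. At `λ = 0` it equals `d - (b - c) k₀`, which is
negative past the branch point, while at `λ = b k₀` the delayed-feedback term `b k₀ e^{-λτ₁}` is
dominated by `λ`, so `χ(b k₀) ≥ d > 0`. The intermediate value theorem gives a root in `(0, b k₀]`.
-/

namespace Tziperman

open Real

/-- The characteristic function `χ` of the trivial equilibrium, restricted to real `λ`. -/
noncomputable def charFunReal (b c d τ₁ τ₂ k₀ x : ℝ) : ℝ :=
  x + d - b * k₀ * exp (-(x * τ₁)) + c * k₀ * exp (-(x * τ₂))

variable {b c d τ₁ τ₂ k₀ : ℝ}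

theorem ofReal_charFunReal (x : ℝ) :
    (charFunReal b c d τ₁ τ₂ k₀ x : ℂ) = x + d - b * k₀ * Complex.exp (-(x * τ₁))
      + c * k₀ * Complex.exp (-(x * τ₂)) := by
  simp [charFunReal]

theorem continuous_charFunReal : Continuous (charFunReal b c d τ₁ τ₂ k₀) := by
  unfold charFunReal
  fun_prop

theorem charFunReal_zero : charFunReal b c d τ₁ τ₂ k₀ 0 = d - (b - c) * k₀ := by
  simp only [charFunReal, zero_mul, neg_zero, exp_zero]
  ring

theorem charFunReal_zero_neg (hbc : c < b) (hpast : d / (b - c) < k₀) :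
    charFunReal b c d τ₁ τ₂ k₀ 0 < 0 := by
  rw [charFunReal_zero, sub_neg, mul_comm]
  exact (div_lt_iff₀ (sub_pos.mpr hbc)).mp hpast

theorem charFunReal_pos (hd : 0 < d) (hck : 0 ≤ c * k₀) (hτ₁ : 0 ≤ τ₁) {x : ℝ}
    (hbk : 0 ≤ b * k₀) (hx : b * k₀ ≤ x) : 0 < charFunReal b c d τ₁ τ₂ k₀ x := by
  have hdecay : exp (-(x * τ₁)) ≤ 1 :=
    exp_le_one_iff.mpr (neg_nonpos.mpr (mul_nonneg (hbk.trans hx) hτ₁))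
  have hfeedback : b * k₀ * exp (-(x * τ₁)) ≤ x :=
    (mul_le_of_le_one_right hbk hdecay).trans hx
  have hdamping : 0 ≤ c * k₀ * exp (-(x * τ₂)) := mul_nonneg hck (exp_pos _).le
  unfold charFunReal
  linarith

end Tziperman

open Tziperman in
theorem enso_instability_past_branch_point_general (b c d τ₁ τ₂ k₀ : ℝ)
    (hb : 0 < b) (hc : 0 < c) (hd : 0 < d) (hτ₁ : 0 < τ₁)
    (hbc : c < b) (hk₀ : 0 ≤ k₀)
    (χ : ℂ → ℂ)
    (hχ : ∀ lam : ℂ, χ lam = lam + (d : ℂ)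
      - (b : ℂ) * (k₀ : ℂ) * Complex.exp (-(lam * (τ₁ : ℂ)))
      + (c : ℂ) * (k₀ : ℂ) * Complex.exp (-(lam * (τ₂ : ℂ))))
    (hpast : d / (b - c) < k₀) :
    ∃ lam : ℝ, 0 < lam ∧ χ (lam : ℂ) = 0 := by
  have hbk : 0 ≤ b * k₀ := mul_nonneg hb.le hk₀
  have hsign : (0 : ℝ) ∈ Set.Ioc (charFunReal b c d τ₁ τ₂ k₀ 0)
      (charFunReal b c d τ₁ τ₂ k₀ (b * k₀)) :=
    ⟨charFunReal_zero_neg hbc hpast,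
      (charFunReal_pos hd (mul_nonneg hc.le hk₀) hτ₁.le hbk le_rfl).le⟩
  obtain ⟨lam, ⟨hlam, -⟩, hroot⟩ :=
    intermediate_value_Ioc hbk continuous_charFunReal.continuousOn hsign
  refine ⟨lam, hlam, ?_⟩
  rw [hχ, ← ofReal_charFunReal, hroot, Complex.ofReal_zero]

/-- Instability of the trivial equilibrium past the branch point: if
`k₀ > d/(b−c)`, then the characteristic function `χ` has a real root
`λ > 0`. -/
theorem enso_instability_past_branch_point (b c d τ₁ τ₂ k₀ : ℝ)
    (hb : 0 < b) (hc : 0 < c) (hd : 0 < d) (hτ₁ : 0 < τ₁) (hτ₂ : 0 < τ₂)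
    (hbc : c < b) (hk₀ : 0 ≤ k₀)
    (χ : ℂ → ℂ)
    (hχ : ∀ lam : ℂ, χ lam = lam + (d : ℂ)
      - (b : ℂ) * (k₀ : ℂ) * Complex.exp (-(lam * (τ₁ : ℂ)))
      + (c : ℂ) * (k₀ : ℂ) * Complex.exp (-(lam * (τ₂ : ℂ))))
    (hpast : d / (b - c) < k₀) :
    ∃ lam : ℝ, 0 < lam ∧ χ (lam : ℂ) = 0 :=
  enso_instability_past_branch_point_general b c d τ₁ τ₂ k₀ hb hc hd hτ₁ hbc hk₀ χ hχ hpast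
end

section
/- Uniqueness of the trivial equilibrium below the branch point: if 0 ≤ k₀·(b − c) ≤ d, then x₀ = 0 is the only real solution of the equilibrium equation (b − c)·G(k₀·x₀) = d·x₀. -/
/-! On each half-line `G` is a rescaling `s * tanh (y / s)` of `tanh`, and `y * tanh y < y ^ 2` for `y ≠ 0`;
hence `y * G y < y ^ 2` off the origin. Multiplying the equilibrium equation by `k₀ x₀` gives
`d k₀ x₀² = (b - c) y G y` with `y = k₀ x₀`, which is strictly below `(b - c) k₀ · k₀ x₀² ≤ d k₀ x₀²`
unless `y = 0`; and then the equation reads `d x₀ = (b - c) G 0 = 0`. -/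

namespace Real

theorem sinh_lt_mul_cosh {t : ℝ} (ht : 0 < t) : sinh t < t * cosh t := by
  have hmono : StrictMonoOn (fun x : ℝ => x * cosh x - sinh x) (Set.Ici 0) := by
    refine strictMonoOn_of_deriv_pos (convex_Ici 0) (by fun_prop) fun x hx => ?_
    rw [interior_Ici] at hx
    have hderiv : HasDerivAt (fun x : ℝ => x * cosh x - sinh x)
        (1 * cosh x + x * sinh x - cosh x) x :=
      ((hasDerivAt_id x).mul (hasDerivAt_cosh x)).sub (hasDerivAt_sinh x)
    rw [hderiv.deriv]
    nlinarith [mul_pos hx (sinh_pos_iff.2 hx)]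
  simpa using hmono Set.self_mem_Ici (Set.mem_Ici.2 ht.le) ht

theorem tanh_lt_self {t : ℝ} (ht : 0 < t) : tanh t < t := by
  rw [tanh_eq_sinh_div_cosh, div_lt_iff₀ (cosh_pos t)]
  exact sinh_lt_mul_cosh ht

theorem mul_tanh_lt_sq {t : ℝ} (ht : t ≠ 0) : t * tanh t < t ^ 2 := by
  rcases ht.lt_or_gt with hneg | hpos
  · have := tanh_lt_self (neg_pos.2 hneg)
    rw [tanh_neg] at this
    nlinarith
  · nlinarith [tanh_lt_self hpos]

theorem mul_mul_tanh_div_lt_sq {s y : ℝ} (hs : s ≠ 0) (hy : y ≠ 0) :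
    y * (s * tanh (y / s)) < y ^ 2 := by
  have hu : y / s ≠ 0 := div_ne_zero hy hs
  calc y * (s * tanh (y / s)) = s ^ 2 * (y / s * tanh (y / s)) := by field_simp
    _ < s ^ 2 * (y / s) ^ 2 := mul_lt_mul_of_pos_left (mul_tanh_lt_sq hu) (by positivity)
    _ = y ^ 2 := by field_simp

end Real

theorem enso_trivial_equilibrium_unique_general (b c d k₀ bp bm : ℝ)
    (hbc : c < b) (hd : 0 < d) (hk₀ : 0 ≤ k₀)
    (hbp : 0 < bp) (hbm : bm < 0)
    (G : ℝ → ℝ)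
    (hG : ∀ x : ℝ, G x =
      if 0 ≤ x then bp * Real.tanh (x / bp) else bm * Real.tanh (x / bm))
    (h1 : k₀ * (b - c) ≤ d) :
    ∀ x₀ : ℝ, (b - c) * G (k₀ * x₀) = d * x₀ → x₀ = 0 := by
  intro x hx
  have hG_lt : ∀ y ≠ 0, y * G y < y ^ 2 := fun y hy => by
    rw [hG]
    split_ifs
    · exact Real.mul_mul_tanh_div_lt_sq hbp.ne' hy
    · exact Real.mul_mul_tanh_div_lt_sq hbm.ne hy
  have hy : k₀ * x = 0 := by
    by_contra hy
    have hcontra : d * (k₀ * x ^ 2) < d * (k₀ * x ^ 2) :=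
      calc d * (k₀ * x ^ 2) = (b - c) * (k₀ * x * G (k₀ * x)) := by
            linear_combination (k₀ * x) * hx.symm
        _ < (b - c) * (k₀ * x) ^ 2 := mul_lt_mul_of_pos_left (hG_lt _ hy) (sub_pos.2 hbc)
        _ = k₀ * (b - c) * (k₀ * x ^ 2) := by ring
        _ ≤ d * (k₀ * x ^ 2) := mul_le_mul_of_nonneg_right h1 (by positivity)
    exact lt_irrefl _ hcontra
  rw [hy, hG, if_pos le_rfl, zero_div, Real.tanh_zero, mul_zero, mul_zero] at hx
  exact (mul_eq_zero.1 hx.symm).resolve_left hd.ne'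

/-- Uniqueness of the trivial equilibrium below the branch point: if
`0 ≤ k₀(b−c) ≤ d`, then `x₀ = 0` is the only real solution of the
equilibrium equation `(b−c)·G(k₀·x₀) = d·x₀`. -/
theorem enso_trivial_equilibrium_unique (b c d k₀ bp bm : ℝ)
    (hb : 0 < b) (hbc : c < b) (hc : 0 < c) (hd : 0 < d) (hk₀ : 0 ≤ k₀)
    (hbp : 0 < bp) (hbm : bm < 0)
    (G : ℝ → ℝ)
    (hG : ∀ x : ℝ, G x =
      if 0 ≤ x then bp * Real.tanh (x / bp) else bm * Real.tanh (x / bm))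
    (h0 : 0 ≤ k₀ * (b - c)) (h1 : k₀ * (b - c) ≤ d) :
    ∀ x₀ : ℝ, (b - c) * G (k₀ * x₀) = d * x₀ → x₀ = 0 :=
  enso_trivial_equilibrium_unique_general b c d k₀ bp bm hbc hd hk₀ hbp hbm G hG h1
end

section
/- Pitchfork pair of secondary equilibria past the branch point: if k₀·(b − c) > d, then the equilibrium equation (b − c)·G(k₀·x₀) = d·x₀ has exactly one solution x₊ with x₊ > 0 and exactly one solution x₋ with x₋ < 0, in addition to the trivial solution x₀ = 0. -/
/-!
Substituting `t = k₀x/b₊` turns the positive branch of the equation into `tanh t = r t` with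
`r = d / (k₀(b − c)) ∈ (0, 1)`, and the negative branch into the same equation for `−x` with `b₊`
replaced by `−b₋`. Since `tanh` has slope `1 > r` at the origin and is bounded by `1`, the
intermediate value theorem gives a positive root; since `tanh` is strictly concave on `[0, ∞)`
and vanishes at `0`, its secant slope `tanh t / t` is strictly decreasing there, so that root is
unique.
-/

open Real Set Filter Topology

theorem StrictConcaveOn.eq_of_eq_mul_of_eq_mul {f : ℝ → ℝ} (hf : StrictConcaveOn ℝ (Ici 0) f)
    (hf₀ : f 0 = 0) {r s t : ℝ} (hs : 0 < s) (ht : 0 < t) (hfs : f s = r * s)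
    (hft : f t = r * t) : s = t := by
  have secant {x y : ℝ} (hx : 0 < x) (hy : 0 < y) (hfx : f x = r * x) (hfy : f y = r * y)
      (hxy : x < y) : False := by
    have := hf.secant_strict_mono self_mem_Ici hx.le hy.le hx.ne' hy.ne' hxy
    simp [hf₀, hfx, hfy, hx.ne', hy.ne'] at this
  by_contra hne
  rcases lt_or_gt_of_ne hne with h | h
  exacts [secant hs ht hfs hft h, secant ht hs hft hfs h]

namespace Real

theorem hasDerivAt_tanh (x : ℝ) : HasDerivAt tanh (1 / cosh x ^ 2) x := by
  have hquot := (hasDerivAt_sinh x).div (hasDerivAt_cosh x) (cosh_pos x).ne'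
  rw [show cosh x * cosh x - sinh x * sinh x = 1 by nlinarith [cosh_sq_sub_sinh_sq x]] at hquot
  exact (funext tanh_eq_sinh_div_cosh).symm ▸ hquot

theorem continuous_tanh_s13 : Continuous tanh :=
  continuous_iff_continuousAt.2 fun x => (hasDerivAt_tanh x).continuousAt

theorem strictConcaveOn_tanh : StrictConcaveOn ℝ (Ici 0) tanh := by
  refine StrictAntiOn.strictConcaveOn_of_deriv (convex_Ici 0) continuous_tanh_s13.continuousOn ?_
  rw [funext fun x => (hasDerivAt_tanh x).deriv, interior_Ici]
  intro x hx y hy hxy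
  have hcosh : cosh x < cosh y := by
    rwa [cosh_lt_cosh, abs_of_pos hx, abs_of_pos (mem_Ioi.1 hy)]
  exact one_div_lt_one_div_of_lt (by positivity) (by gcongr)

theorem exists_pos_tanh_eq_mul {r : ℝ} (hr₀ : 0 < r) (hr₁ : r < 1) :
    ∃ t, 0 < t ∧ tanh t = r * t := by
  have hslope : Tendsto (fun t => t⁻¹ * tanh t) (𝓝[>] 0) (𝓝 1) := by
    simpa using (hasDerivAt_tanh 0).tendsto_slope_zero_right
  obtain ⟨t₀, hslope_t₀, ht₀ : 0 < t₀⟩ :=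
    ((hslope.eventually (lt_mem_nhds hr₁)).and self_mem_nhdsWithin).exists
  have hbelow : r * t₀ < tanh t₀ := by
    rw [mul_comm]
    exact (lt_inv_mul_iff₀ ht₀).1 hslope_t₀
  have habove : tanh r⁻¹ < r * r⁻¹ := by
    rw [mul_inv_cancel₀ hr₀.ne']
    exact tanh_lt_one _
  have ht₀_le : t₀ ≤ r⁻¹ := by
    rw [← one_div, le_div_iff₀ hr₀]
    linarith [tanh_lt_one t₀]
  obtain ⟨t, ht, hroot⟩ := intermediate_value_Ioo' ht₀_le
    (continuous_tanh_s13.sub (continuous_const_mul r)).continuousOn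
    (show (0 : ℝ) ∈ Ioo (tanh r⁻¹ - r * r⁻¹) (tanh t₀ - r * t₀) by constructor <;> linarith)
  exact ⟨t, ht₀.trans ht.1, sub_eq_zero.1 hroot⟩

theorem existsUnique_pos_tanh_eq_mul {r : ℝ} (hr₀ : 0 < r) (hr₁ : r < 1) :
    ∃! t, 0 < t ∧ tanh t = r * t := by
  obtain ⟨t, ht, hroot⟩ := exists_pos_tanh_eq_mul hr₀ hr₁
  exact ⟨t, ⟨ht, hroot⟩, fun s ⟨hs, hsroot⟩ =>
    strictConcaveOn_tanh.eq_of_eq_mul_of_eq_mul tanh_zero hs ht hsroot hroot⟩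

end Real

theorem existsUnique_pos_mul_mul_tanh_eq {a d k β : ℝ} (ha : 0 < a) (hd : 0 < d) (hβ : 0 < β)
    (hdk : d < k * a) : ∃! y, 0 < y ∧ a * (β * tanh (k * y / β)) = d * y := by
  have hk : 0 < k := pos_of_mul_pos_left (hd.trans hdk) ha.le
  have hscale : 0 < k / β := div_pos hk hβ
  refine ((Equiv.mulLeft₀ (k / β) hscale.ne').existsUnique_congr fun y => ?_).2
    (existsUnique_pos_tanh_eq_mul (r := d / (k * a)) (by positivity)
      ((div_lt_one (by positivity)).2 hdk))
  rw [Equiv.mulLeft₀_apply, mul_pos_iff_of_pos_left hscale, div_mul_eq_mul_div]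
  refine and_congr_right fun _ => ?_
  field_simp

theorem enso_pitchfork_pair_general (b c d k₀ bp bm : ℝ)
    (hbc : c < b) (hd : 0 < d)
    (hbp : 0 < bp) (hbm : bm < 0)
    (G : ℝ → ℝ)
    (hG : ∀ x : ℝ, G x =
      if 0 ≤ x then bp * Real.tanh (x / bp) else bm * Real.tanh (x / bm))
    (hpast : d < k₀ * (b - c)) :
    (b - c) * G (k₀ * 0) = d * 0 ∧
      (∃! x : ℝ, 0 < x ∧ (b - c) * G (k₀ * x) = d * x) ∧
      (∃! x : ℝ, x < 0 ∧ (b - c) * G (k₀ * x) = d * x) := by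
  have hbc' : 0 < b - c := sub_pos.2 hbc
  have hk₀ : 0 < k₀ := pos_of_mul_pos_left (hd.trans hpast) hbc'.le
  refine ⟨by simp [hG], ?_, ?_⟩
  · refine (existsUnique_congr fun x => and_congr_right fun hx => ?_).2
      (existsUnique_pos_mul_mul_tanh_eq hbc' hd hbp hpast)
    rw [hG, if_pos (by positivity)]
  · refine ((Equiv.neg ℝ).existsUnique_congr fun x => ?_).2
      (existsUnique_pos_mul_mul_tanh_eq hbc' hd (neg_pos.2 hbm) hpast)
    simp only [Equiv.neg_apply, neg_pos]
    refine and_congr_right fun hx => ?_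
    rw [hG, if_neg (not_le.2 (mul_neg_of_pos_of_neg hk₀ hx)), mul_neg, neg_div_neg_eq]
    constructor <;> intro h <;> linarith

/-- Pitchfork pair of secondary equilibria past the branch point: if
`k₀(b−c) > d`, then the equilibrium equation `(b−c)·G(k₀·x₀) = d·x₀` has
exactly one positive solution and exactly one negative solution, in addition
to the trivial solution `x₀ = 0`. -/
theorem enso_pitchfork_pair (b c d k₀ bp bm : ℝ)
    (hb : 0 < b) (hbc : c < b) (hc : 0 < c) (hd : 0 < d) (hk₀ : 0 ≤ k₀)
    (hbp : 0 < bp) (hbm : bm < 0)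
    (G : ℝ → ℝ)
    (hG : ∀ x : ℝ, G x =
      if 0 ≤ x then bp * Real.tanh (x / bp) else bm * Real.tanh (x / bm))
    (hpast : d < k₀ * (b - c)) :
    (b - c) * G (k₀ * 0) = d * 0 ∧
      (∃! x : ℝ, 0 < x ∧ (b - c) * G (k₀ * x) = d * x) ∧
      (∃! x : ℝ, x < 0 ∧ (b - c) * G (k₀ * x) = d * x) :=
  enso_pitchfork_pair_general b c d k₀ bp bm hbc hd hbp hbm G hG hpast
end
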